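/- arXiv:0712.2177 — 2 statements merged into one kernel-verified Lean document; each statement's English description precedes it below -/
import Mathlib

section
/- Fix a polynomial q ∈ O_F[X] with q(0) = 0 and non-zero image in K[X], and an integer R ∈ ℤ. The following are equivalent: (i) for all data a₁,a₂,n₁,n₂,h with depth R and normalised polynomial q and every Schwartz–Bruhat f on K×K, the function (x,y) ↦ g(x, y − h(x)) (g the lift of f at (a₁,a₂),(n₁,n₂)) is Fubini with repeated integral ∫_K∫_K f du dv · X^{n₁+n₂}; (ii) the same holds for all data of the form 0,0,0,0,h with depth R, normalised polynomial q and h(0) = 0; (iii) for every Schwartz–Bruhat f on K×K, the function (x,y) ↦ f⁰(x, y − t^R q(x)) is Fubini; (iv) for every Schwartz–Bruhat f on K×K: for each y ∈ F the function x ↦ f⁰(x, y − t^R q(x)) lies in L(F), the function y ↦ ∫^F f⁰(x, y − t^R q(x)) dx lies in L(F), and ∫^F∫^F f⁰(x, y − t^R q(x)) dx dy = ∫_K∫_K f(u,v) du dv. -/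
/-!
Everything reduces to `Φ(x, y) = f⁰(x, y − t^R q(x))`. For data of depth `R` with normalised
polynomial `q`, the function `(x, y) ↦ g(x, y − h(x))` is `Φ` composed with the affine change of
variables `x ↦ t^{-n₁}(x − a₁)`, `y ↦ t^{-n₂}(y − a₂ − h(a₁))`, and `∫^F` rescales by
`|t^{-n}|⁻¹ = X^n` under it; so (iii) implies (i), while (iii) is the case `h = t^R q` of (ii).
For `x ∈ O` the section `y ↦ Φ(x, y)` is a translate of the lift of `v ↦ f(x̄, v)`, so
integrating `Φ` first in `y` always works and gives `∫∫ f`; being Fubini then amounts to (iv).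
-/

noncomputable section

open MeasureTheory Polynomial
open scoped Classical

/-- The field `ℂ(X)` of complex rational functions. -/
abbrev CX : Type := RatFunc ℂ

/-- A complete discrete valuation field with residue field `K`:
`Fc` is the field, `O` its ring of integers, `t` a fixed prime element,
`res` the residue map and `ν` the discrete valuation.  The axioms say that `O` is a
valuation subring of `Fc`, `t` is irreducible in `O`, `res` is surjective with kernel
`tO`, every nonzero element is a unit times `t ^ ν`, and `O` is `t`-adically complete. -/
structure CDVF (K : Type) [Field K] : Type 1 where
  Fc : Type
  fieldF : Field Fc
  O : Subring Fc
  t : Fc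
  ht : t ∈ O
  res : O →+* K
  ν : Fc → ℤ
  hval : ∀ x : Fc, x ∈ O ∨ x⁻¹ ∈ O
  hirr : Irreducible (⟨t, ht⟩ : O)
  hres_surj : Function.Surjective res
  hres_ker : ∀ x : O, res x = 0 ↔ (⟨t, ht⟩ : O) ∣ x
  hν : ∀ x : Fc, x ≠ 0 → ∃ u : O, IsUnit u ∧ x = (u : Fc) * t ^ ν x
  hcomplete : ∀ s : ℕ → O, (∀ n : ℕ, (⟨t, ht⟩ : O) ^ n ∣ (s (n + 1) - s n)) →
    ∃ L : O, ∀ n : ℕ, (⟨t, ht⟩ : O) ^ n ∣ (L - s n)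

attribute [instance] CDVF.fieldF

namespace CDVF

variable {K : Type} [Field K] (E : CDVF K)

/-- The residue map, extended by zero outside the ring of integers. -/
def resF (x : E.Fc) : K := if h : x ∈ E.O then E.res ⟨x, h⟩ else 0

/-- The translated fractional ideal `a + t^c O`. -/
def tfi (a : E.Fc) (c : ℤ) : Set E.Fc := {y : E.Fc | ∃ z ∈ E.O, y = a + E.t ^ c * z}

/-- The lift `f⁰` of a function on the residue field. -/
def lift0 (f : K → ℂ) : E.Fc → CX := fun x =>
  if x ∈ E.O then algebraMap ℂ CX (f (E.resF x)) else 0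

/-- The lift `f^{a,n}` of `f` at `a, n`, determined by `f^{a,n}(a + t^n x) = f⁰(x)`. -/
def liftAt (f : K → ℂ) (a : E.Fc) (n : ℤ) : E.Fc → CX := fun z =>
  E.lift0 f (E.t ^ (-n) * (z - a))

/-- The two-dimensional lift `f⁰` of `f : K × K → ℂ`. -/
def lift0₂ (f : K × K → ℂ) : E.Fc → E.Fc → CX := fun x y =>
  if x ∈ E.O ∧ y ∈ E.O then algebraMap ℂ CX (f (E.resF x, E.resF y)) else 0

/-- The lift of `f : K × K → ℂ` at `(a₁,a₂),(n₁,n₂)`. -/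
def liftAt₂ (f : K × K → ℂ) (a₁ a₂ : E.Fc) (n₁ n₂ : ℤ) : E.Fc → E.Fc → CX := fun z w =>
  E.lift0₂ f (E.t ^ (-n₁) * (z - a₁)) (E.t ^ (-n₂) * (w - a₂))

/-- The space `L(F)` of integrable functions on `F`: the `ℂ(X)`-span of the lifts
`f^{a,n}` of Haar integrable functions `f` on the residue field. -/
def LF [MeasurableSpace K] (μ : Measure K) : Submodule CX (E.Fc → CX) :=
  Submodule.span CX
    {g : E.Fc → CX | ∃ f : K → ℂ, Integrable f μ ∧ ∃ (a : E.Fc) (n : ℤ), g = E.liftAt f a n}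

/-- `Φ(x,y) = f⁰(x, y − t^R q(x))`. -/
def Phi (f : K × K → ℂ) (R : ℤ) (q : Polynomial E.O) : E.Fc → E.Fc → CX := fun x y =>
  E.lift0₂ f x (y - E.t ^ R * Polynomial.eval x (q.map E.O.subtype))

/-- The non-singular part `Φ_ns` of `Φ`: the restriction of `Φ` to `W_ns × F`,
extended by zero, where `W_ns = {x ∈ O : q̄′(x̄) ≠ 0}`. -/
def PhiNS (f : K × K → ℂ) (R : ℤ) (q : Polynomial E.O) : E.Fc → E.Fc → CX := fun x y =>
  if x ∈ E.O ∧ Polynomial.eval (E.resF x) (Polynomial.derivative (q.map E.res)) ≠ 0 then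
    E.Phi f R q x y else 0

/-- The singular part `Φ_sing` of `Φ`: the restriction of `Φ` to `W_sing × F`,
extended by zero, where `W_sing = {x ∈ O : q̄′(x̄) = 0}`. -/
def PhiSing (f : K × K → ℂ) (R : ℤ) (q : Polynomial E.O) : E.Fc → E.Fc → CX := fun x y =>
  if x ∈ E.O ∧ Polynomial.eval (E.resF x) (Polynomial.derivative (q.map E.res)) = 0 then
    E.Phi f R q x y else 0

end CDVF

section Normed

variable {K : Type} [NontriviallyNormedField K]

/-- The absolute value `|α| = |res(α t^{−ν(α)})|_K ⬝ X^{ν(α)} ∈ ℂ(X)` of `α ∈ F^×`. -/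
def CDVF.absF (E : CDVF K) (α : E.Fc) : CX :=
  algebraMap ℂ CX ((‖E.resF (α * E.t ^ (-E.ν α))‖ : ℝ) : ℂ) * RatFunc.X ^ E.ν α

/-- Schwartz–Bruhat functions on `K × K` (for nonarchimedean `K`: the locally constant
functions of compact support). -/
def IsSB (f : K × K → ℂ) : Prop := IsLocallyConstant f ∧ HasCompactSupport f

variable [MeasurableSpace K] (μ : Measure K)

/-- A Haar integrable `f : K × K → ℂ` is Fubini: both repeated integrals exist and agree. -/
def KFubini (f : K × K → ℂ) : Prop :=
  Integrable f (μ.prod μ) ∧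
  (∀ u : K, Integrable (fun v => f (u, v)) μ) ∧
  (∀ v : K, Integrable (fun u => f (u, v)) μ) ∧
  Integrable (fun u => ∫ v, f (u, v) ∂μ) μ ∧
  Integrable (fun v => ∫ u, f (u, v) ∂μ) μ ∧
  (∫ u, ∫ v, f (u, v) ∂μ ∂μ) = ∫ v, ∫ u, f (u, v) ∂μ ∂μ

/-- `I` is the two-dimensional integral `∫^F` on `L(F)`: a `ℂ(X)`-linear functional which
lifts the Haar integral, is translation invariant, and is compatible with multiplicative
structure. -/
def CDVF.IsIntegralF (E : CDVF K) (I : (E.Fc → CX) →ₗ[CX] CX) : Prop :=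
  (∀ f : K → ℂ, Integrable f μ → I (E.lift0 f) = algebraMap ℂ CX (∫ u, f u ∂μ)) ∧
  (∀ g ∈ E.LF μ, ∀ a : E.Fc, I (fun x => g (x + a)) = I g) ∧
  (∀ g ∈ E.LF μ, ∀ α : E.Fc, α ≠ 0 → I (fun x => g (α * x)) = (E.absF α)⁻¹ * I g)

/-- A `ℂ(X)`-valued function on `F × F` is Fubini (with respect to the integral `I`):
all sections and repeated integrands are integrable and the two repeated integrals agree. -/
def CDVF.FFubini (E : CDVF K) (I : (E.Fc → CX) →ₗ[CX] CX) (g : E.Fc → E.Fc → CX) : Prop :=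
  (∀ x : E.Fc, (fun y => g x y) ∈ E.LF μ) ∧
  ((fun x => I (fun y => g x y)) ∈ E.LF μ) ∧
  (∀ y : E.Fc, (fun x => g x y) ∈ E.LF μ) ∧
  ((fun y => I (fun x => g x y)) ∈ E.LF μ) ∧
  I (fun x => I (fun y => g x y)) = I (fun y => I (fun x => g x y))

/-- The conclusion of the change-of-variables conjecture for the data
`a₁, a₂, n₁, n₂, h`: for every Schwartz–Bruhat `f` on `K × K`, with `g` the lift of `f` at
`(a₁,a₂),(n₁,n₂)`, the function `(x,y) ↦ g(x, y − h(x))` is Fubini on `F × F` with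
repeated integral `∫∫ f du dv ⬝ X^{n₁+n₂}`. -/
def CDVF.ConjHolds (E : CDVF K) (I : (E.Fc → CX) →ₗ[CX] CX)
    (a₁ a₂ : E.Fc) (n₁ n₂ : ℤ) (h : Polynomial E.Fc) : Prop :=
  ∀ f : K × K → ℂ, IsSB f →
    E.FFubini μ I (fun x y => E.liftAt₂ f a₁ a₂ n₁ n₂ x (y - Polynomial.eval x h)) ∧
    I (fun y => I (fun x => E.liftAt₂ f a₁ a₂ n₁ n₂ x (y - Polynomial.eval x h))) =
      algebraMap ℂ CX (∫ v, ∫ u, f (u, v) ∂μ ∂μ) * RatFunc.X ^ (n₁ + n₂)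

end Normed

section HaarScaling

variable {K F : Type*} [NontriviallyNormedField K] [MeasurableSpace K] [BorelSpace K]
    [LocallyCompactSpace K] {μ : Measure K} [μ.IsAddHaarMeasure] [NormedAddCommGroup F]

theorem MeasureTheory.Integrable.comp_mul_left₀ {f : K → F} (hf : Integrable f μ) {c : K}
    (hc : c ≠ 0) : Integrable (fun x => f (c * x)) μ := by
  have := ProperSpace.of_nontriviallyNormedField_of_weaklyLocallyCompactSpace K
  let L : K ≃L[K] K := ContinuousLinearEquiv.unitsEquivAut K (Units.mk0 c hc)
  have hL : μ.map L = Measure.addHaarScalarFactor (μ.map L) μ • μ :=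
    Measure.isAddLeftInvariant_eq_smul _ _
  have hmap : Integrable f (μ.map L) := by
    rw [hL]
    exact hf.smul_measure ENNReal.coe_ne_top
  simpa [Function.comp_def, L, mul_comm] using
    (integrable_map_equiv L.toHomeomorph.toMeasurableEquiv f).1 hmap

end HaarScaling

section CompactSupportSections

variable {X Y F : Type*} [TopologicalSpace X] [TopologicalSpace Y] [T2Space Y]
    [NormedAddCommGroup F]

theorem HasCompactSupport.comp_prodMk {f : X × Y → F} (hf : HasCompactSupport f) (x : X) :
    HasCompactSupport (fun y => f (x, y)) := by
  refine HasCompactSupport.intro (hf.image continuous_snd) fun y hy => ?_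
  by_contra hne
  exact hy ⟨(x, y), subset_closure (Function.mem_support.2 hne), rfl⟩

theorem integrable_section_of_continuous_of_hasCompactSupport [MeasurableSpace Y]
    [OpensMeasurableSpace Y] (ν : Measure Y) [IsFiniteMeasureOnCompacts ν] {f : X × Y → F}
    (hf : Continuous f) (hfs : HasCompactSupport f) (x : X) :
    Integrable (fun y => f (x, y)) ν :=
  (hf.comp (Continuous.prodMk_right x)).integrable_of_hasCompactSupport (hfs.comp_prodMk x)

end CompactSupportSections

section ContinuousCompactSupport

variable {K F : Type*} [NontriviallyNormedField K] [MeasurableSpace K] [BorelSpace K]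
    [LocallyCompactSpace K] (μ : Measure K) [μ.IsAddHaarMeasure] [NormedAddCommGroup F]
    {f : K × K → F} (hf : Continuous f) (hfs : HasCompactSupport f)
include hf hfs

theorem integrable_prod_of_continuous_of_hasCompactSupport : Integrable f (μ.prod μ) := by
  have := ProperSpace.of_nontriviallyNormedField_of_weaklyLocallyCompactSpace K
  exact hf.integrable_of_hasCompactSupport hfs

variable [NormedSpace ℝ F]

theorem integrable_integral_section_of_continuous_of_hasCompactSupport :
    Integrable (fun u => ∫ v, f (u, v) ∂μ) μ := by
  have := ProperSpace.of_nontriviallyNormedField_of_weaklyLocallyCompactSpace K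
  exact (integrable_prod_of_continuous_of_hasCompactSupport μ hf hfs).integral_prod_left

theorem integral_integral_swap_of_continuous_of_hasCompactSupport :
    ∫ u, ∫ v, f (u, v) ∂μ ∂μ = ∫ v, ∫ u, f (u, v) ∂μ ∂μ := by
  have := ProperSpace.of_nontriviallyNormedField_of_weaklyLocallyCompactSpace K
  exact integral_integral_swap (integrable_prod_of_continuous_of_hasCompactSupport μ hf hfs)

end ContinuousCompactSupport

namespace CDVF

section Algebraic

variable {K : Type} [Field K] (E : CDVF K)

def tO : E.O := ⟨E.t, E.ht⟩

theorem t_ne_zero : E.t ≠ 0 := fun h => E.hirr.ne_zero (Subtype.ext h)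

theorem eq_zero_of_isUnit_of_coe_eq_t_zpow {u : E.O} (hu : IsUnit u) {k : ℤ}
    (h : (u : E.Fc) = E.t ^ k) : k = 0 := by
  have hT : ∀ n : ℕ, IsUnit (E.tO ^ n) → n = 0 := fun n hn => by
    by_contra hn0
    exact E.hirr.not_isUnit ((isUnit_pow_iff hn0).1 hn)
  obtain ⟨n, rfl | rfl⟩ := Int.eq_nat_or_neg k
  · have : u = E.tO ^ n := Subtype.ext (by simpa [tO] using h)
    simp [hT n (this ▸ hu)]
  · have : u * E.tO ^ n = 1 := Subtype.ext (by simp [tO, h, zpow_neg, E.t_ne_zero])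
    simp [hT n (IsUnit.of_mul_eq_one_right _ this)]

theorem ν_t_zpow (n : ℤ) : E.ν (E.t ^ n) = n := by
  obtain ⟨u, hu, h⟩ := E.hν _ (zpow_ne_zero n E.t_ne_zero)
  have : (u : E.Fc) = E.t ^ (n - E.ν (E.t ^ n)) := by
    rw [zpow_sub₀ E.t_ne_zero, eq_div_iff (zpow_ne_zero _ E.t_ne_zero), ← h]
  have := E.eq_zero_of_isUnit_of_coe_eq_t_zpow hu this
  omega

theorem unit_mul_mem_iff {u : E.O} (hu : IsUnit u) {w : E.Fc} :
    (u : E.Fc) * w ∈ E.O ↔ w ∈ E.O := by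
  refine ⟨fun h => ?_, E.O.mul_mem u.2⟩
  obtain ⟨v, hv⟩ := hu.exists_left_inv
  have hw : w = (v : E.Fc) * ((u : E.Fc) * w) := by
    rw [← mul_assoc, ← Subring.coe_mul, hv, Subring.coe_one, one_mul]
  exact hw ▸ E.O.mul_mem v.2 h

theorem lift0_unit_mul {u : E.O} (hu : IsUnit u) (f : K → ℂ) (w : E.Fc) :
    E.lift0 f ((u : E.Fc) * w) = E.lift0 (fun v => f (E.res u * v)) w := by
  by_cases hw : w ∈ E.O
  · have huw : (u : E.Fc) * w ∈ E.O := E.O.mul_mem u.2 hw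
    rw [lift0, lift0, if_pos huw, if_pos hw, resF, resF, dif_pos huw, dif_pos hw, ← map_mul]
    rfl
  · rw [lift0, lift0, if_neg ((E.unit_mul_mem_iff hu).not.2 hw), if_neg hw]

theorem liftAt_mem_LF [MeasurableSpace K] (μ : Measure K) {f : K → ℂ} (hf : Integrable f μ)
    (a : E.Fc) (n : ℤ) : E.liftAt f a n ∈ E.LF μ :=
  Submodule.subset_span ⟨f, hf, a, n, rfl⟩

theorem lift0_mem_LF [MeasurableSpace K] (μ : Measure K) {f : K → ℂ} (hf : Integrable f μ) :
    E.lift0 f ∈ E.LF μ := by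
  have : E.liftAt f 0 0 = E.lift0 f := funext fun z => by simp [liftAt]
  exact this ▸ E.liftAt_mem_LF μ hf 0 0

theorem liftAt_comp_affine (f : K → ℂ) (a : E.Fc) (n : ℤ) {α : E.Fc} {u : E.O} {m : ℤ}
    (hα : α ≠ 0) (hu : IsUnit u) (hαu : α = u * E.t ^ m) (β : E.Fc) :
    (fun x => E.liftAt f a n (α * x + β)) =
      E.liftAt (fun v => f (E.res u * v)) (α⁻¹ * (a - β)) (n - m) := by
  funext x
  rw [liftAt, liftAt, ← E.lift0_unit_mul hu]
  congr 1
  have h1 : α * x + β - a = α * (x - α⁻¹ * (a - β)) := by field_simp; ring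
  rw [h1]
  generalize x - α⁻¹ * (a - β) = y
  rw [hαu, neg_sub, zpow_sub₀ E.t_ne_zero, zpow_neg]
  field_simp

variable (f : K × K → ℂ) (R : ℤ) (q : Polynomial E.O)

theorem Phi_section_of_mem {x : E.Fc} (hx : x ∈ E.O) :
    (fun y => E.Phi f R q x y) =
      E.liftAt (fun v => f (E.resF x, v)) (E.t ^ R * eval x (q.map E.O.subtype)) 0 := by
  funext y
  simp only [Phi, liftAt, lift0₂, lift0, neg_zero, zpow_zero, one_mul, hx, true_and]

theorem Phi_section_of_not_mem {x : E.Fc} (hx : x ∉ E.O) :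
    (fun y => E.Phi f R q x y) = 0 := by
  funext y
  simp [Phi, lift0₂, hx]

theorem liftAt₂_sub_eval_eq_Phi {a₁ a₂ : E.Fc} {n₁ n₂ R' : ℤ} {h : Polynomial E.Fc}
    (hh : ∀ x : E.Fc, eval (a₁ + E.t ^ n₁ * x) h =
      eval a₁ h + E.t ^ R' * eval x (q.map E.O.subtype))
    (hR : R' - n₂ = R) (x y : E.Fc) :
    E.liftAt₂ f a₁ a₂ n₁ n₂ x (y - eval x h) =
      E.Phi f R q (E.t ^ (-n₁) * x + -(E.t ^ (-n₁) * a₁))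
        (E.t ^ (-n₂) * y + -(E.t ^ (-n₂) * (a₂ + eval a₁ h))) := by
  set x' := E.t ^ (-n₁) * x + -(E.t ^ (-n₁) * a₁)
  have hx : a₁ + E.t ^ n₁ * x' = x := by
    simp only [x', mul_add, mul_neg, ← mul_assoc, ← zpow_add₀ E.t_ne_zero, add_neg_cancel,
      zpow_zero, one_mul]
    ring
  have hRt : E.t ^ R = E.t ^ (-n₂) * E.t ^ R' := by
    rw [← zpow_add₀ E.t_ne_zero, ← hR]
    ring_nf
  rw [liftAt₂, Phi, ← hx, hh, hx, hRt]
  congr 1 <;> ring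

end Algebraic

theorem absF_t_zpow {K : Type} [NontriviallyNormedField K] (E : CDVF K) (n : ℤ) :
    E.absF (E.t ^ n) = RatFunc.X ^ n := by
  have h1 : E.resF 1 = 1 := by rw [resF, dif_pos E.O.one_mem]; exact map_one E.res
  rw [absF, E.ν_t_zpow, ← zpow_add₀ E.t_ne_zero, add_neg_cancel, zpow_zero, h1]
  simp

section Haar

variable {K : Type} [NontriviallyNormedField K] [MeasurableSpace K] [BorelSpace K]
    {μ : Measure K} [μ.IsAddHaarMeasure] (E : CDVF K) {I : (E.Fc → CX) →ₗ[CX] CX}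

theorem Phi_section_mem_LF (R : ℤ) (q : Polynomial E.O) {f : K × K → ℂ} (hf : Continuous f)
    (hfs : HasCompactSupport f) (x : E.Fc) : (fun y => E.Phi f R q x y) ∈ E.LF μ := by
  by_cases hx : x ∈ E.O
  · rw [E.Phi_section_of_mem f R q hx]
    exact E.liftAt_mem_LF μ (integrable_section_of_continuous_of_hasCompactSupport μ hf hfs _) _ _
  · rw [E.Phi_section_of_not_mem f R q hx]
    exact Submodule.zero_mem _

variable [LocallyCompactSpace K]

theorem comp_affine_mem_LF {g : E.Fc → CX} (hg : g ∈ E.LF μ) {α : E.Fc} (hα : α ≠ 0)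
    (β : E.Fc) : (fun x => g (α * x + β)) ∈ E.LF μ := by
  let T : (E.Fc → CX) →ₗ[CX] (E.Fc → CX) :=
    { toFun := fun g x => g (α * x + β)
      map_add' := fun _ _ => rfl
      map_smul' := fun _ _ => rfl }
  suffices E.LF μ ≤ (E.LF μ).comap T from this hg
  rw [LF, Submodule.span_le]
  rintro _ ⟨f, hf, a, n, rfl⟩
  obtain ⟨u, hu, hαu⟩ := E.hν α hα
  show (fun x => E.liftAt f a n (α * x + β)) ∈ E.LF μ
  rw [E.liftAt_comp_affine f a n hα hu hαu]
  exact E.liftAt_mem_LF μ (hf.comp_mul_left₀ (hu.map E.res).ne_zero) _ _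

theorem integral_comp_affine (hI : E.IsIntegralF μ I) {g : E.Fc → CX} (hg : g ∈ E.LF μ)
    {α : E.Fc} (hα : α ≠ 0) (β : E.Fc) :
    I (fun x => g (α * x + β)) = (E.absF α)⁻¹ * I g := by
  have hgβ : (fun x => g (x + β)) ∈ E.LF μ := by
    simpa using E.comp_affine_mem_LF hg one_ne_zero β
  rw [hI.2.2 _ hgβ α hα, hI.2.1 g hg β]

theorem integral_liftAt (hI : E.IsIntegralF μ I) {f : K → ℂ} (hf : Integrable f μ)
    (a : E.Fc) (n : ℤ) :
    I (E.liftAt f a n) = RatFunc.X ^ n * algebraMap ℂ CX (∫ u, f u ∂μ) := by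
  have h : E.liftAt f a n = fun x => E.lift0 f (E.t ^ (-n) * x + -(E.t ^ (-n) * a)) :=
    funext fun x => by rw [liftAt, mul_sub, sub_eq_add_neg]
  rw [h, E.integral_comp_affine hI (E.lift0_mem_LF μ hf) (zpow_ne_zero _ E.t_ne_zero),
    E.absF_t_zpow, hI.1 f hf, zpow_neg, inv_inv]

section AffineChange

variable (hI : E.IsIntegralF μ I) {G : E.Fc → E.Fc → CX} (hG : ∀ y, G y ∈ E.LF μ)
    {α γ : E.Fc} (hα : α ≠ 0) (hγ : γ ≠ 0) (β δ : E.Fc)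
include hI hG hα

theorem integral_section_comp_affine :
    (fun y => I (fun x => G (γ * y + δ) (α * x + β))) =
      (E.absF α)⁻¹ • fun y => I (G (γ * y + δ)) :=
  funext fun _ => E.integral_comp_affine hI (hG _) hα β

include hγ

theorem integral_section_comp_affine_mem_LF (hGI : (fun y => I (G y)) ∈ E.LF μ) :
    (fun y => I (fun x => G (γ * y + δ) (α * x + β))) ∈ E.LF μ := by
  rw [E.integral_section_comp_affine hI hG hα β δ]
  exact Submodule.smul_mem _ _ (E.comp_affine_mem_LF hGI hγ δ)

theorem integral_integral_comp_affine (hGI : (fun y => I (G y)) ∈ E.LF μ) :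
    I (fun y => I (fun x => G (γ * y + δ) (α * x + β))) =
      (E.absF α)⁻¹ * (E.absF γ)⁻¹ * I (fun y => I (G y)) := by
  rw [E.integral_section_comp_affine hI hG hα β δ, map_smul, smul_eq_mul,
    E.integral_comp_affine hI hGI hγ δ, mul_assoc]

end AffineChange

theorem FFubini.comp_affine (hI : E.IsIntegralF μ I) {g : E.Fc → E.Fc → CX}
    (hg : E.FFubini μ I g) {α γ : E.Fc} (hα : α ≠ 0) (hγ : γ ≠ 0) (β δ : E.Fc) :
    E.FFubini μ I (fun x y => g (α * x + β) (γ * y + δ)) := by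
  obtain ⟨hxsec, hxint, hysec, hyint, hswap⟩ := hg
  refine ⟨fun x => E.comp_affine_mem_LF (hxsec _) hγ δ,
    E.integral_section_comp_affine_mem_LF hI hxsec hγ hα δ β hxint,
    fun y => E.comp_affine_mem_LF (hysec _) hα β,
    E.integral_section_comp_affine_mem_LF (G := fun y x => g x y) hI hysec hα hγ β δ hyint,
    ?_⟩
  rw [E.integral_integral_comp_affine hI hxsec hγ hα δ β hxint,
    E.integral_integral_comp_affine (G := fun y x => g x y) hI hysec hα hγ β δ hyint, hswap,
    mul_comm (E.absF γ)⁻¹]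

variable (R : ℤ) (q : Polynomial E.O) {f : K × K → ℂ} (hf : Continuous f)
    (hfs : HasCompactSupport f)
include hf hfs

theorem integral_Phi_section (hI : E.IsIntegralF μ I) :
    (fun x => I (fun y => E.Phi f R q x y)) = E.lift0 (fun u => ∫ v, f (u, v) ∂μ) := by
  funext x
  by_cases hx : x ∈ E.O
  · rw [E.Phi_section_of_mem f R q hx, E.integral_liftAt hI
      (integrable_section_of_continuous_of_hasCompactSupport μ hf hfs _), zpow_zero, one_mul,
      lift0, if_pos hx]
  · rw [E.Phi_section_of_not_mem f R q hx, lift0, if_neg hx, map_zero]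

theorem integral_integral_Phi (hI : E.IsIntegralF μ I) :
    I (fun x => I (fun y => E.Phi f R q x y)) =
      algebraMap ℂ CX (∫ v, ∫ u, f (u, v) ∂μ ∂μ) := by
  rw [E.integral_Phi_section R q hf hfs hI,
    hI.1 _ (integrable_integral_section_of_continuous_of_hasCompactSupport μ hf hfs),
    integral_integral_swap_of_continuous_of_hasCompactSupport μ hf hfs]

end Haar

end CDVF

section Statement10

variable {K : Type} [NontriviallyNormedField K] [MeasurableSpace K] [BorelSpace K]
    [LocallyCompactSpace K] (μ : Measure K) [Measure.IsAddHaarMeasure μ]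
    (E : CDVF K) (I : (E.Fc → CX) →ₗ[CX] CX)
    (R : ℤ) (q : Polynomial E.O)

/-- Condition (i): the conjecture is true for all data with depth `R` and normalised
polynomial `q`. -/
def Cond1 : Prop :=
  ∀ (a₁ a₂ : E.Fc) (n₁ n₂ : ℤ) (h : Polynomial E.Fc) (R' : ℤ),
    (∀ x : E.Fc, Polynomial.eval (a₁ + E.t ^ n₁ * x) h =
      Polynomial.eval a₁ h + E.t ^ R' * Polynomial.eval x (q.map E.O.subtype)) →
    R' - n₂ = R → E.ConjHolds μ I a₁ a₂ n₁ n₂ h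

/-- Condition (ii): the conjecture is true for all data of the form `0,0,0,0,h` with
depth `R`, normalised polynomial `q` and `h(0) = 0`. -/
def Cond2 : Prop :=
  ∀ h : Polynomial E.Fc, Polynomial.eval 0 h = 0 →
    (∀ x : E.Fc, Polynomial.eval ((0 : E.Fc) + E.t ^ (0 : ℤ) * x) h =
      Polynomial.eval (0 : E.Fc) h + E.t ^ R * Polynomial.eval x (q.map E.O.subtype)) →
    E.ConjHolds μ I 0 0 0 0 h

/-- Condition (iii): for all Schwartz–Bruhat `f`, the function
`(x,y) ↦ f⁰(x, y − t^R q(x))` is Fubini. -/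
def Cond3 : Prop := ∀ f : K × K → ℂ, IsSB f → E.FFubini μ I (E.Phi f R q)

/-- Condition (iv): for all Schwartz–Bruhat `f`, the `dx dy` repeated integral of
`(x,y) ↦ f⁰(x, y − t^R q(x))` is well defined and equals `∫_K ∫_K f(u,v) du dv`. -/
def Cond4 : Prop :=
  ∀ f : K × K → ℂ, IsSB f →
    (∀ y : E.Fc, (fun x => E.Phi f R q x y) ∈ E.LF μ) ∧
    ((fun y => I (fun x => E.Phi f R q x y)) ∈ E.LF μ) ∧
    I (fun y => I (fun x => E.Phi f R q x y)) =
      algebraMap ℂ CX (∫ v, ∫ u, f (u, v) ∂μ ∂μ)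

theorem CDVF.integral_integral_Phi_of_FFubini (hI : E.IsIntegralF μ I) {f : K × K → ℂ}
    (hf : IsSB f) (hΦ : E.FFubini μ I (E.Phi f R q)) :
    I (fun y => I (fun x => E.Phi f R q x y)) = algebraMap ℂ CX (∫ v, ∫ u, f (u, v) ∂μ ∂μ) :=
  hΦ.2.2.2.2 ▸ E.integral_integral_Phi R q hf.1.continuous hf.2 hI

omit [BorelSpace K] [LocallyCompactSpace K] [Measure.IsAddHaarMeasure μ] in
theorem cond2_of_cond1 : Cond1 μ E I R q → Cond2 μ E I R q :=
  fun h1 h _ hh => h1 0 0 0 0 h R hh (sub_zero R)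

omit [BorelSpace K] [LocallyCompactSpace K] [Measure.IsAddHaarMeasure μ] in
theorem cond3_of_cond2 (hq0 : q.coeff 0 = 0) : Cond2 μ E I R q → Cond3 μ E I R q := by
  intro h2 f hf
  let h : Polynomial E.Fc := C (E.t ^ R) * q.map E.O.subtype
  have hh0 : eval 0 h = 0 := by simp [h, ← coeff_zero_eq_eval_zero, hq0]
  have hh : ∀ x : E.Fc, eval ((0 : E.Fc) + E.t ^ (0 : ℤ) * x) h =
      eval (0 : E.Fc) h + E.t ^ R * eval x (q.map E.O.subtype) := fun x => by
    simp [h, hh0]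
  simpa [E.liftAt₂_sub_eval_eq_Phi f R q hh (sub_zero R), hh0] using (h2 h hh0 hh f hf).1

theorem cond1_of_cond3 (hI : E.IsIntegralF μ I) : Cond3 μ E I R q → Cond1 μ E I R q := by
  intro h3 a₁ a₂ n₁ n₂ h R' hh hR f hf
  have hΦ := h3 f hf
  have ht : ∀ n : ℤ, E.t ^ n ≠ 0 := fun n => zpow_ne_zero n E.t_ne_zero
  simp only [E.liftAt₂_sub_eval_eq_Phi f R q hh hR]
  refine ⟨hΦ.comp_affine E hI (ht _) (ht _) _ _, ?_⟩
  rw [E.integral_integral_comp_affine (G := fun y x => E.Phi f R q x y) hI hΦ.2.2.1 (ht _)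
    (ht _) _ _ hΦ.2.2.2.1, E.integral_integral_Phi_of_FFubini μ I R q hI hf hΦ,
    E.absF_t_zpow, E.absF_t_zpow, zpow_neg, zpow_neg, inv_inv, inv_inv,
    zpow_add₀ RatFunc.X_ne_zero]
  ring

theorem cond4_of_cond3 (hI : E.IsIntegralF μ I) : Cond3 μ E I R q → Cond4 μ E I R q :=
  fun h3 f hf => ⟨(h3 f hf).2.2.1, (h3 f hf).2.2.2.1,
    E.integral_integral_Phi_of_FFubini μ I R q hI hf (h3 f hf)⟩

theorem cond3_of_cond4 (hI : E.IsIntegralF μ I) : Cond4 μ E I R q → Cond3 μ E I R q := by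
  intro h4 f hf
  obtain ⟨hysec, hyint, hvalue⟩ := h4 f hf
  have hfc := hf.1.continuous
  refine ⟨E.Phi_section_mem_LF R q hfc hf.2, ?_, hysec, hyint, ?_⟩
  · rw [E.integral_Phi_section R q hfc hf.2 hI]
    exact E.lift0_mem_LF μ
      (integrable_integral_section_of_continuous_of_hasCompactSupport μ hfc hf.2)
  · rw [hvalue, E.integral_integral_Phi R q hfc hf.2 hI]

theorem statement10 (hI : E.IsIntegralF μ I)
    (hq0 : q.coeff 0 = 0) :
    (Cond1 μ E I R q ↔ Cond2 μ E I R q) ∧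
    (Cond2 μ E I R q ↔ Cond3 μ E I R q) ∧
    (Cond3 μ E I R q ↔ Cond4 μ E I R q) := by
  have h12 := cond2_of_cond1 μ E I R q
  have h23 := cond3_of_cond2 μ E I R q hq0
  have h31 := cond1_of_cond3 μ E I R q hI
  exact ⟨⟨h12, h31 ∘ h23⟩, ⟨h23, h12 ∘ h31⟩,
    ⟨cond4_of_cond3 μ E I R q hI, cond3_of_cond4 μ E I R q hI⟩⟩

end Statement10
end
end

section
/- Assume K has positive characteristic p, q̄ ∈ K[X] is purely inseparable (a polynomial in X^p), and R = −1. Then both repeated integrals of Φ are well-defined (for each y ∈ F, x ↦ Φ(x,y) lies in L(F) and y ↦ ∫^F Φ(x,y) dx lies in L(F); for each x ∈ F, y ↦ Φ(x,y) lies in L(F) and x ↦ ∫^F Φ(x,y) dy lies in L(F)), and ∫^F∫^F Φ(x,y) dx dy = 0 while ∫^F∫^F Φ(x,y) dy dx = ∫_K∫_K f(u,v) du dv. In particular, if ∫_K∫_K f(u,v) du dv ≠ 0 then the two repeated integrals of Φ differ, so Φ is not Fubini. -/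
noncomputable section

open MeasureTheory Polynomial
open scoped Classical

section AuxLemmas

variable {K : Type} [Field K] (E : CDVF K)

lemma CDVF.t_ne_zero' : E.t ≠ 0 := fun h => E.hirr.ne_zero (Subtype.ext h)

lemma CDVF.res_t : E.res ⟨E.t, E.ht⟩ = 0 := (E.hres_ker _).2 dvd_rfl

lemma CDVF.eval_coe (q : Polynomial E.O) (b : E.O) :
    Polynomial.eval (b : E.Fc) (q.map E.O.subtype) = ((Polynomial.eval b q : E.O) : E.Fc) := by
  rw [Polynomial.eval_map]
  exact Polynomial.eval₂_at_apply E.O.subtype b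

lemma CDVF.res_eval (q : Polynomial E.O) (b : E.O) :
    Polynomial.eval (E.res b) (q.map E.res) = E.res (Polynomial.eval b q) := by
  rw [Polynomial.eval_map]
  exact Polynomial.eval₂_at_apply E.res b

lemma CDVF.key (q : Polynomial E.O) (hd : Polynomial.derivative (q.map E.res) = 0)
    (a b : E.O) (hab : E.res a = E.res b) :
    ∃ k : E.O, ((Polynomial.eval a q : E.O) : E.Fc) - ((Polynomial.eval b q : E.O) : E.Fc)
      = E.t ^ 2 * (k : E.Fc) := by
  obtain ⟨c, hc⟩ := (E.hres_ker (a - b)).1 (by rw [map_sub, hab, sub_self])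
  obtain ⟨d, hd'⟩ : (⟨E.t, E.ht⟩ : E.O) ∣ Polynomial.eval b (Polynomial.derivative q) := by
    apply (E.hres_ker _).1
    rw [← E.res_eval, ← Polynomial.derivative_map, hd, Polynomial.eval_zero]
  obtain ⟨k, hk⟩ := Polynomial.binomExpansion q b (⟨E.t, E.ht⟩ * c)
  refine ⟨d * c + k * (c * c), ?_⟩
  have ha : a = b + (⟨E.t, E.ht⟩ : E.O) * c := by rw [← hc]; ring
  have : Polynomial.eval a q - Polynomial.eval b q
      = (⟨E.t, E.ht⟩ : E.O) ^ 2 * (d * c + k * (c * c)) := by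
    rw [ha, hk, hd']; ring
  have h2 := congrArg (fun z : E.O => (z : E.Fc)) this
  push_cast at h2
  exact h2

lemma CDVF.mem_shift (z : E.Fc) (k : E.O) (h : z ∈ E.O) : z + E.t * k ∈ E.O :=
  E.O.add_mem h (E.O.mul_mem E.ht k.2)

lemma CDVF.mem_shift_iff (z : E.Fc) (k : E.O) : z + E.t * k ∈ E.O ↔ z ∈ E.O := by
  constructor
  · intro h
    have h2 := E.mem_shift _ (-k) h
    have h3 : z + E.t * (k : E.Fc) + E.t * ((-k : E.O) : E.Fc) = z := by push_cast; ring
    rwa [h3] at h2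
  · exact fun h => E.mem_shift z k h

lemma CDVF.resF_shift (z : E.Fc) (k : E.O) (h : z ∈ E.O) :
    E.resF (z + E.t * k) = E.resF z := by
  have h2 : z + E.t * (k : E.Fc) ∈ E.O := E.mem_shift z k h
  rw [CDVF.resF, CDVF.resF, dif_pos h, dif_pos h2]
  have h3 : (⟨z + E.t * (k : E.Fc), h2⟩ : E.O) = ⟨z, h⟩ + ⟨E.t, E.ht⟩ * k := by
    apply Subtype.ext; rfl
  rw [h3, map_add, map_mul, E.res_t, zero_mul, add_zero]

lemma CDVF.lift0_eq_liftAt (f : K → ℂ) : E.lift0 f = E.liftAt f 0 0 := by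
  funext z
  simp [CDVF.liftAt]

end AuxLemmas

lemma hcs_left {X Y Z : Type*} [TopologicalSpace X] [TopologicalSpace Y] [T2Space X]
    [T2Space Y] [Zero Z] {f : X × Y → Z} (hf : HasCompactSupport f) (a : X) :
    HasCompactSupport (fun v => f (a, v)) := by
  have hK : IsCompact (Prod.snd '' tsupport f) := hf.image continuous_snd
  exact IsCompact.of_isClosed_subset hK (isClosed_tsupport _)
    (closure_minimal (fun v hv => ⟨(a, v), subset_tsupport f hv, rfl⟩) hK.isClosed)

/-- Suppose K has characteristic p > 0, q̄ is purely inseparable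
(a polynomial in X^p) and R = −1.  Then both repeated integrals of Φ are well defined,
∫^F∫^F Φ dx dy = 0 while ∫^F∫^F Φ dy dx = ∫_K∫_K f du dv; in particular if
∫_K∫_K f du dv ≠ 0 then the two repeated integrals of Φ differ. -/
theorem statement18 {K : Type} [NontriviallyNormedField K] [MeasurableSpace K] [BorelSpace K]
    [LocallyCompactSpace K] (μ : Measure K) [Measure.IsAddHaarMeasure μ]
    (E : CDVF K) (I : (E.Fc → CX) →ₗ[CX] CX) (hI : E.IsIntegralF μ I)
    (R : ℤ) (hR : R < 0) (q : Polynomial E.O) (hq0 : q.coeff 0 = 0)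
    (hqbar : q.map E.res ≠ 0) (f : K × K → ℂ) (hf : IsSB f)
    (p : ℕ) (hp : p.Prime) [CharP K p]
    (hinsep : ∃ s : Polynomial K, q.map E.res = s.comp (Polynomial.X ^ p))
    (hR1 : R = -1) :
    (∀ y : E.Fc, (fun x => E.Phi f R q x y) ∈ E.LF μ) ∧
    ((fun y => I (fun x => E.Phi f R q x y)) ∈ E.LF μ) ∧
    (∀ x : E.Fc, (fun y => E.Phi f R q x y) ∈ E.LF μ) ∧
    ((fun x => I (fun y => E.Phi f R q x y)) ∈ E.LF μ) ∧
    I (fun y => I (fun x => E.Phi f R q x y)) = 0 ∧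
    I (fun x => I (fun y => E.Phi f R q x y)) =
      algebraMap ℂ CX (∫ v, ∫ u, f (u, v) ∂μ ∂μ) ∧
    ((∫ v, ∫ u, f (u, v) ∂μ ∂μ) ≠ 0 →
      I (fun x => I (fun y => E.Phi f R q x y)) ≠
        I (fun y => I (fun x => E.Phi f R q x y))) := by
  subst hR1
  have hproper : ProperSpace K :=
    ProperSpace.of_nontriviallyNormedField_of_weaklyLocallyCompactSpace K
  obtain ⟨hlc, hcs⟩ := hf
  have ht0 : E.t ≠ 0 := E.t_ne_zero'
  have hfc : Continuous f := hlc.continuous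
  have hfint : Integrable f (μ.prod μ) := hfc.integrable_of_hasCompactSupport hcs
  -- the reduction of q has zero derivative
  have hder : Polynomial.derivative (q.map E.res) = 0 := by
    obtain ⟨s, hs⟩ := hinsep
    rw [hs, Polynomial.derivative_comp, Polynomial.derivative_X_pow]
    simp [CharP.cast_eq_zero K p]
  -- a section of the residue map
  set σ : K → E.O := Function.surjInv E.hres_surj with hσ
  have hσ_res : ∀ u, E.res (σ u) = u := fun u => Function.surjInv_eq E.hres_surj u
  ---------------------------------------------------------------------------
  -- Direction 1 : for each y, x ↦ Φ(x,y) is the lift of a μ-null function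
  ---------------------------------------------------------------------------
  have main1 : ∀ y : E.Fc, ∃ g : K → ℂ, Integrable g μ ∧ (∫ u, g u ∂μ) = 0 ∧
      (fun x => E.Phi f (-1) q x y) = E.lift0 g := by
    intro y
    set B : K → E.Fc :=
      fun u => y - E.t ^ (-1 : ℤ) * ((Polynomial.eval (σ u) q : E.O) : E.Fc) with hB
    set g : K → ℂ := fun u => if h : B u ∈ E.O then f (u, E.resF (B u)) else 0 with hg
    have gval_pos : ∀ u, B u ∈ E.O → g u = f (u, E.resF (B u)) := fun u h => dif_pos h
    have gval_neg : ∀ u, ¬ (B u ∈ E.O) → g u = 0 := fun u h => dif_neg h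
    -- g is supported on a finite set
    have hnull : ∀ᵐ u ∂μ, g u = 0 := by
      have hfin : (Function.support g).Finite := by
        have hsub : ∀ u : K, g u ≠ 0 → ∃ hty : E.t * y ∈ E.O,
            Polynomial.eval u (q.map E.res) = E.res ⟨E.t * y, hty⟩ := by
          intro u hu
          have hu' : (if h : B u ∈ E.O then f (u, E.resF (B u)) else 0) ≠ 0 := hu
          have hBu : B u ∈ E.O := by
            by_contra hB'
            rw [dif_neg hB'] at hu'
            exact hu' rfl
          have hmul : E.t * B u = E.t * y - ((Polynomial.eval (σ u) q : E.O) : E.Fc) := by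
            rw [hB]
            rw [zpow_neg_one, mul_sub, ← mul_assoc, mul_inv_cancel₀ ht0, one_mul]
          have hty2 : E.t * y = E.t * B u + ((Polynomial.eval (σ u) q : E.O) : E.Fc) := by
            rw [hmul]; ring
          have htyO : E.t * y ∈ E.O := by
            rw [hty2]
            exact E.O.add_mem (E.O.mul_mem E.ht hBu) (Polynomial.eval (σ u) q).2
          refine ⟨htyO, ?_⟩
          have h1 : (⟨E.t * y, htyO⟩ : E.O) = ⟨E.t, E.ht⟩ * ⟨B u, hBu⟩ + Polynomial.eval (σ u) q := by
            apply Subtype.ext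
            exact hty2
          calc Polynomial.eval u (q.map E.res) = E.res (Polynomial.eval (σ u) q) := by
                rw [← hσ_res u, E.res_eval, hσ_res u]
            _ = E.res ⟨E.t * y, htyO⟩ := by
                rw [h1, map_add, map_mul, E.res_t, zero_mul, zero_add]
        by_cases hty : E.t * y ∈ E.O
        · set P : Polynomial K := q.map E.res - Polynomial.C (E.res ⟨E.t * y, hty⟩) with hP
          have hP0 : P ≠ 0 := by
            intro h0
            have hqc : q.map E.res = Polynomial.C (E.res ⟨E.t * y, hty⟩) := by
              rw [← sub_eq_zero]; exact h0
            have hc := congrArg (fun r : Polynomial K => r.coeff 0) hqc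
            simp only [Polynomial.coeff_map, hq0, map_zero, Polynomial.coeff_C_zero] at hc
            rw [hqc, ← hc, Polynomial.C_0] at hqbar
            exact hqbar rfl
          apply Set.Finite.subset (Polynomial.finite_setOf_isRoot hP0)
          intro u hu
          obtain ⟨hty', hroot⟩ := hsub u hu
          show Polynomial.IsRoot P u
          rw [Polynomial.IsRoot, hP, Polynomial.eval_sub, Polynomial.eval_C, hroot]
          rw [sub_eq_zero]
        · apply Set.Finite.subset Set.finite_empty
          intro u hu
          obtain ⟨hty', -⟩ := hsub u hu
          exact absurd hty' hty
      rw [MeasureTheory.ae_iff]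
      have : {u : K | ¬ g u = 0} = Function.support g := rfl
      rw [this]
      exact hfin.measure_zero μ
    have hgint : Integrable g μ :=
      MeasureTheory.Integrable.congr (integrable_zero _ _ _) (Filter.EventuallyEq.symm hnull)
    refine ⟨g, hgint, integral_eq_zero_of_ae hnull, ?_⟩
    -- Φ(·,y) = g⁰
    funext x
    by_cases hx : x ∈ E.O
    · set b : E.O := ⟨x, hx⟩ with hb
      have hresx : E.resF x = E.res b := dif_pos hx
      obtain ⟨k, hk'⟩ := E.key q hder b (σ (E.res b)) (by rw [hσ_res])
      have hev : Polynomial.eval x (q.map E.O.subtype) = ((Polynomial.eval b q : E.O) : E.Fc) :=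
        E.eval_coe q b
      have htt : E.t⁻¹ * E.t ^ 2 = E.t := by
        rw [sq, ← mul_assoc, inv_mul_cancel₀ ht0, one_mul]
      have hnk : ((-k : E.O) : E.Fc) = -((k : E.O) : E.Fc) := by push_cast; ring
      have hAB : y - E.t ^ (-1 : ℤ) * ((Polynomial.eval b q : E.O) : E.Fc)
          = B (E.res b) + E.t * ((-k : E.O) : E.Fc) := by
        rw [zpow_neg_one, hnk, hB]
        rw [zpow_neg_one]
        linear_combination (-(E.t⁻¹)) * hk' + (-((k : E.O) : E.Fc)) * htt
      show E.lift0₂ f x (y - E.t ^ (-1 : ℤ) * Polynomial.eval x (q.map E.O.subtype))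
          = E.lift0 g x
      rw [hev, CDVF.lift0₂, CDVF.lift0, if_pos hx, hresx, hAB]
      by_cases hBO : B (E.res b) ∈ E.O
      · have hmem : B (E.res b) + E.t * ((-k : E.O) : E.Fc) ∈ E.O :=
          (E.mem_shift_iff _ _).mpr hBO
        rw [if_pos ⟨hx, hmem⟩, E.resF_shift _ _ hBO]
        rw [gval_pos _ hBO]
      · have hmem : ¬ (B (E.res b) + E.t * ((-k : E.O) : E.Fc) ∈ E.O) :=
          fun h => hBO ((E.mem_shift_iff _ _).mp h)
        rw [if_neg (fun h => hmem h.2)]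
        rw [gval_neg _ hBO, map_zero]
    · show E.lift0₂ f x _ = E.lift0 g x
      rw [CDVF.lift0₂, CDVF.lift0, if_neg (fun h => hx h.1), if_neg hx]
  have int1 : ∀ y : E.Fc, I (fun x => E.Phi f (-1) q x y) = 0 := by
    intro y
    obtain ⟨g, hgi, hg0, hgeq⟩ := main1 y
    rw [hgeq, hI.1 g hgi, hg0, map_zero]
  have mem1 : ∀ y : E.Fc, (fun x => E.Phi f (-1) q x y) ∈ E.LF μ := by
    intro y
    obtain ⟨g, hgi, -, hgeq⟩ := main1 y
    rw [hgeq, E.lift0_eq_liftAt]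
    exact Submodule.subset_span ⟨g, hgi, 0, 0, rfl⟩
  have zf : (fun y => I (fun x => E.Phi f (-1) q x y)) = (0 : E.Fc → CX) :=
    funext fun y => int1 y
  ---------------------------------------------------------------------------
  -- Direction 2
  ---------------------------------------------------------------------------
  have hfx_int : ∀ u : K, Integrable (fun v => f (u, v)) μ := fun u =>
    Continuous.integrable_of_hasCompactSupport (hfc.comp (Continuous.prodMk_right u))
      (hcs_left hcs u)
  have main2 : ∀ x : E.Fc,
      I (fun y => E.Phi f (-1) q x y) = E.lift0 (fun u => ∫ v, f (u, v) ∂μ) x ∧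
      (fun y => E.Phi f (-1) q x y) ∈ E.LF μ := by
    intro x
    by_cases hx : x ∈ E.O
    · set c : E.Fc := E.t ^ (-1 : ℤ) * Polynomial.eval x (q.map E.O.subtype) with hc
      set fx : K → ℂ := fun v => f (E.resF x, v) with hfx
      have heq : (fun y => E.Phi f (-1) q x y) = fun y => (E.lift0 fx) (y + (-c)) := by
        funext y
        show E.lift0₂ f x (y - c) = E.lift0 fx (y + (-c))
        rw [← sub_eq_add_neg, CDVF.lift0₂, CDVF.lift0]
        by_cases hyO : y - c ∈ E.O
        · rw [if_pos ⟨hx, hyO⟩, if_pos hyO]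
        · rw [if_neg (fun h => hyO h.2), if_neg hyO]
      have hfxint : Integrable fx μ := hfx_int _
      have hmem0 : E.lift0 fx ∈ E.LF μ := by
        rw [E.lift0_eq_liftAt]
        exact Submodule.subset_span ⟨fx, hfxint, 0, 0, rfl⟩
      constructor
      · rw [heq, hI.2.1 (E.lift0 fx) hmem0 (-c), hI.1 fx hfxint, CDVF.lift0, if_pos hx]
      · have heq2 : (fun y => E.Phi f (-1) q x y) = E.liftAt fx c 0 := by
          rw [heq]
          funext y
          simp [CDVF.liftAt, sub_eq_add_neg]
        rw [heq2]
        exact Submodule.subset_span ⟨fx, hfxint, c, 0, rfl⟩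
    · have heq : (fun y => E.Phi f (-1) q x y) = (0 : E.Fc → CX) := by
        funext y
        show E.lift0₂ f x _ = 0
        rw [CDVF.lift0₂, if_neg (fun h => hx h.1)]
      constructor
      · rw [heq, map_zero, CDVF.lift0, if_neg hx]
      · rw [heq]; exact Submodule.zero_mem _
  have h2 : (fun x => I (fun y => E.Phi f (-1) q x y)) = E.lift0 (fun u => ∫ v, f (u, v) ∂μ) :=
    funext fun x => (main2 x).1
  have hhint : Integrable (fun u => ∫ v, f (u, v) ∂μ) μ := hfint.integral_prod_left
  have hswap : (∫ u, ∫ v, f (u, v) ∂μ ∂μ) = ∫ v, ∫ u, f (u, v) ∂μ ∂μ := by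
    have huncurry : Function.uncurry (fun u v => f (u, v)) = f := by
      funext p; rfl
    exact MeasureTheory.integral_integral_swap (by rw [huncurry]; exact hfint)
  have int2 : I (fun x => I (fun y => E.Phi f (-1) q x y)) =
      algebraMap ℂ CX (∫ v, ∫ u, f (u, v) ∂μ ∂μ) := by
    rw [h2, hI.1 _ hhint, ← hswap]
  have int0 : I (fun y => I (fun x => E.Phi f (-1) q x y)) = 0 := by
    rw [zf, map_zero]
  refine ⟨mem1, ?_, fun x => (main2 x).2, ?_, int0, int2, ?_⟩
  · rw [zf]; exact Submodule.zero_mem _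
  · rw [h2, E.lift0_eq_liftAt]
    exact Submodule.subset_span ⟨_, hhint, 0, 0, rfl⟩
  · intro hne
    rw [int2, int0]
    intro h
    exact hne ((algebraMap ℂ CX).injective (by rw [h, map_zero]))
end
end
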